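/- arXiv:0903.4050 — 7 statements merged into one kernel-verified Lean document; each statement's English description precedes it below -/
import Mathlib

section
/- Let x : ℕ → ℤ be a CL trajectory with gcd(x 0, x 1) = 1. Then there exists N such that either x n = 1 for all n ≥ N, or x n = −1 for all n ≥ N, or x(n+6) = x n for all n ≥ N and the tuple (x N, x(N+1), x(N+2), x(N+3), x(N+4), x(N+5)) is a cyclic rotation of (−2, 1, 3, 2, −1, −3). -/
/-!
The potential `ψ(a, b) = |a| + |b| + |a - b| = 2 max(|a|, |b|, |a - b|)` never increases along a
CL trajectory, so it is eventually constant, say equal to `V`. While it is constant, an odd-odd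
pair `(a, b)` is either `±(1, 1)` or has `2|b| = V` and is followed by an even term. From an
(odd, even) pair `(a, b)` with `2|a| = V` three steps lead to another such pair `(a', b')` with
`3b' - 2a' = (3b - 2a)/2`, so infinite descent forces `3b = 2a`. Coprimality of consecutive terms
is preserved, hence `(a, b) = ±(3, 2)`, which lies on the 6-cycle through `(-2, 1)`.
-/

/-- A CL trajectory: `x (n+2) = (x n + x (n+1)) / 2` when `x n + x (n+1)` is even,
and `x (n+2) = x (n+1) - x n` when it is odd. -/
def IsCLTrajectory (x : ℕ → ℤ) : Prop :=
  ∀ n : ℕ,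
    (Even (x n + x (n + 1)) → x (n + 2) = (x n + x (n + 1)) / 2) ∧
    (Odd (x n + x (n + 1)) → x (n + 2) = x (n + 1) - x n)

def clNext (a b : ℤ) : ℤ := if Even (a + b) then (a + b) / 2 else b - a

def clPotential (a b : ℤ) : ℕ := a.natAbs + b.natAbs + (a - b).natAbs

/-- `(1, 1)` and `(-1, -1)` are fixed by the CL rule and `(-2, 1)` starts its 6-cycle. -/
def IsCLLimitPair (a b : ℤ) : Prop :=
  (a = 1 ∧ b = 1) ∨ (a = -1 ∧ b = -1) ∨ (a = -2 ∧ b = 1)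

theorem isCLTrajectory_iff {x : ℕ → ℤ} :
    IsCLTrajectory x ↔ ∀ n, x (n + 2) = clNext (x n) (x (n + 1)) := by
  refine ⟨fun hx n => ?_, fun hx n => ⟨fun h => by rw [hx, clNext, if_pos h], fun h => ?_⟩⟩
  · unfold clNext
    split_ifs with h
    exacts [(hx n).1 h, (hx n).2 (Int.not_even_iff_odd.mp h)]
  · rw [hx, clNext, if_neg (Int.not_even_iff_odd.mpr h)]

theorem isCLTrajectory_const (s : ℤ) : IsCLTrajectory fun _ => s :=
  isCLTrajectory_iff.mpr fun _ => by rw [clNext, if_pos ⟨s, rfl⟩]; omega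

namespace IsCLTrajectory

variable {x y : ℕ → ℤ}

theorem shift (hx : IsCLTrajectory x) (k : ℕ) : IsCLTrajectory fun n => x (k + n) :=
  fun n => hx (k + n)

theorem apply_add_two (hx : IsCLTrajectory x) (n : ℕ) : x (n + 2) = clNext (x n) (x (n + 1)) :=
  isCLTrajectory_iff.mp hx n

theorem apply_add_two_of_eq (hx : IsCLTrajectory x) {n : ℕ} {a b : ℤ} (ha : x n = a)
    (hb : x (n + 1) = b) : x (n + 2) = clNext a b := by
  rw [hx.apply_add_two, ha, hb]

theorem two_mul_apply_add_two (hx : IsCLTrajectory x) {n : ℕ} (h : Even (x n + x (n + 1))) :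
    2 * x (n + 2) = x n + x (n + 1) := by
  rw [(hx n).1 h, Int.two_mul_ediv_two_of_even h]

theorem apply_add_two_of_odd (hx : IsCLTrajectory x) {n : ℕ} (h : Odd (x n + x (n + 1))) :
    x (n + 2) = x (n + 1) - x n :=
  (hx n).2 h

theorem apply_add_eq_of_eq (hx : IsCLTrajectory x) (hy : IsCLTrajectory y) {a b : ℕ}
    (h0 : x a = y b) (h1 : x (a + 1) = y (b + 1)) (j : ℕ) : x (a + j) = y (b + j) := by
  suffices ∀ j, x (a + j) = y (b + j) ∧ x (a + j + 1) = y (b + j + 1) from (this j).1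
  intro j
  induction j with
  | zero => exact ⟨h0, h1⟩
  | succ j ih =>
    refine ⟨ih.2, ?_⟩
    change x (a + j + 2) = y (b + j + 2)
    rw [hx.apply_add_two, hy.apply_add_two, ih.1, ih.2]

theorem const_of_apply_eq (hx : IsCLTrajectory x) {k : ℕ} {s : ℤ} (h0 : x k = s)
    (h1 : x (k + 1) = s) : ∀ n ≥ k, x n = s := by
  intro n hn
  obtain ⟨j, rfl⟩ := Nat.exists_eq_add_of_le hn
  exact hx.apply_add_eq_of_eq (isCLTrajectory_const s) (b := 0) h0 h1 j

theorem periodic_of_neg_two_one (hx : IsCLTrajectory x) {N : ℕ} (h0 : x N = -2)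
    (h1 : x (N + 1) = 1) :
    (∀ n ≥ N, x (n + 6) = x n) ∧ ∀ i : Fin 6, x (N + i) = ![(-2 : ℤ), 1, 3, 2, -1, -3] i := by
  have h2 : x (N + 2) = 3 := (hx.apply_add_two_of_eq h0 h1).trans (by decide)
  have h3 : x (N + 3) = 2 := (hx.apply_add_two_of_eq h1 h2).trans (by decide)
  have h4 : x (N + 4) = -1 := (hx.apply_add_two_of_eq h2 h3).trans (by decide)
  have h5 : x (N + 5) = -3 := (hx.apply_add_two_of_eq h3 h4).trans (by decide)
  have h6 : x (N + 6) = -2 := (hx.apply_add_two_of_eq h4 h5).trans (by decide)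
  have h7 : x (N + 7) = 1 := (hx.apply_add_two_of_eq h5 h6).trans (by decide)
  refine ⟨fun n hn => ?_, fun i => by fin_cases i <;> simp [h0, h1, h2, h3, h4, h5]⟩
  obtain ⟨j, rfl⟩ := Nat.exists_eq_add_of_le hn
  have := hx.apply_add_eq_of_eq (hx.shift 6) (a := N) (b := N) (by rw [h0, add_comm, h6])
    (by rw [h1, ← add_assoc, add_comm 6 N, h7]) j
  rw [this, add_comm 6, add_right_comm]

theorem isCoprime_succ (hx : IsCLTrajectory x) {n : ℕ} (h : IsCoprime (x n) (x (n + 1))) :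
    IsCoprime (x (n + 1)) (x (n + 2)) := by
  obtain ⟨u, v, huv⟩ := h
  rcases Int.even_or_odd (x n + x (n + 1)) with he | ho
  · exact ⟨v - u, 2 * u, by linear_combination huv + u * hx.two_mul_apply_add_two he⟩
  · exact ⟨u + v, -u, by linear_combination huv - u * hx.apply_add_two_of_odd ho⟩

theorem isCoprime (hx : IsCLTrajectory x) (h : IsCoprime (x 0) (x 1)) :
    ∀ n, IsCoprime (x n) (x (n + 1))
  | 0 => h
  | n + 1 => hx.isCoprime_succ (hx.isCoprime h n)

theorem exists_odd_odd (hx : IsCLTrajectory x) (h : IsCoprime (x 0) (x 1)) :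
    ∃ n, Odd (x n) ∧ Odd (x (n + 1)) := by
  rcases Int.even_or_odd (x 0) with h0 | h0 <;> rcases Int.even_or_odd (x 1) with h1 | h1
  · exact absurd (h.isUnit_of_dvd' h0.two_dvd h1.two_dvd) (by decide)
  · have h2 := hx.apply_add_two_of_odd (h0.add_odd h1)
    exact ⟨1, h1, h2 ▸ h1.sub_even h0⟩
  · have h2 := hx.apply_add_two_of_odd (h0.add_even h1)
    have h2' : Odd (x 2) := h2 ▸ h1.sub_odd h0
    have h3 := hx.apply_add_two_of_odd (n := 1) (h1.add_odd h2')
    exact ⟨2, h2', h3 ▸ h2'.sub_even h1⟩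
  · exact ⟨0, h0, h1⟩

theorem clPotential_succ_le (hx : IsCLTrajectory x) (n : ℕ) :
    clPotential (x (n + 1)) (x (n + 2)) ≤ clPotential (x n) (x (n + 1)) := by
  unfold clPotential
  rcases Int.even_or_odd (x n + x (n + 1)) with h | h
  · have := hx.two_mul_apply_add_two h
    omega
  · rw [hx.apply_add_two_of_odd h]
    omega

theorem antitone_clPotential (hx : IsCLTrajectory x) :
    Antitone fun n => clPotential (x n) (x (n + 1)) :=
  antitone_nat_of_succ_le hx.clPotential_succ_le

theorem eq_or_of_clPotential_eq {a b c : ℤ} (h : 2 * c = a + b) (ha : Odd a) (hb : Odd b)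
    (hψ : clPotential b c = clPotential a b) :
    a = b ∨
      6 ≤ clPotential a b ∧ 2 * b.natAbs = clPotential a b ∧ 2 * c.natAbs < clPotential a b := by
  rw [Int.odd_iff] at ha hb
  unfold clPotential at *
  omega

section ConstantPotential

variable {V : ℕ} (hx : IsCLTrajectory x) (hcop : ∀ n, IsCoprime (x n) (x (n + 1)))
  (hV : ∀ n, clPotential (x n) (x (n + 1)) = V)
include hx hcop hV

theorem odd_odd_of_clPotential_eq (n : ℕ) (h0 : Odd (x n)) (h1 : Odd (x (n + 1))) :
    (x n = x (n + 1) ∧ (x n).natAbs = 1) ∨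
      6 ≤ V ∧ 2 * (x (n + 1)).natAbs = V ∧ Even (x (n + 2)) := by
  have hψ (m : ℕ) : clPotential (x (m + 1)) (x (m + 2)) = clPotential (x m) (x (m + 1)) := by
    rw [hV, hV]
  rcases eq_or_of_clPotential_eq (hx.two_mul_apply_add_two (h0.add_odd h1)) h0 h1 (hψ n) with
    heq | ⟨h6, hb, hc⟩
  · exact .inl
      ⟨heq, Int.isUnit_iff_natAbs_eq.mp ((hcop n).isUnit_of_dvd' dvd_rfl (heq ▸ dvd_rfl))⟩
  rw [hV] at h6 hb hc
  refine .inr ⟨h6, hb, Int.not_odd_iff_even.mp fun h2 => ?_⟩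
  have e : 2 * x (n + 3) = x (n + 1) + x (n + 2) := hx.two_mul_apply_add_two (h1.add_odd h2)
  rcases eq_or_of_clPotential_eq e h1 h2 (hψ (n + 1)) with heq | ⟨-, hb', -⟩
  · omega
  · rw [hV] at hb'
    omega

theorem odd_even_of_clPotential_eq (h6 : 6 ≤ V) (m : ℕ) (h0 : Odd (x m)) (h1 : Even (x (m + 1)))
    (hm : 2 * (x m).natAbs = V) :
    Even (x (m + 4)) ∧ x (m + 3) = -x m ∧
      2 * (3 * x (m + 4) - 2 * x (m + 3)) = 3 * x (m + 1) - 2 * x m := by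
  have e2 : x (m + 2) = x (m + 1) - x m := hx.apply_add_two_of_odd (h0.add_even h1)
  have h2 : Odd (x (m + 2)) := e2 ▸ h1.sub_odd h0
  have e3 : x (m + 3) = x (m + 2) - x (m + 1) := hx.apply_add_two_of_odd (h1.add_odd h2)
  have h3 : Odd (x (m + 3)) := e3 ▸ h2.sub_even h1
  obtain ⟨heq, -⟩ | ⟨-, -, h4⟩ : (x (m + 2) = x (m + 3) ∧ (x (m + 2)).natAbs = 1) ∨
      6 ≤ V ∧ 2 * (x (m + 3)).natAbs = V ∧ Even (x (m + 4)) :=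
    hx.odd_odd_of_clPotential_eq hcop hV (m + 2) h2 h3
  · have hzero : x (m + 1) = 0 := by omega
    have hunit := (hcop m).isUnit_of_dvd' dvd_rfl (hzero ▸ dvd_zero (x m))
    rw [Int.isUnit_iff_natAbs_eq] at hunit
    omega
  · have e4 : 2 * x (m + 4) = x (m + 2) + x (m + 3) := hx.two_mul_apply_add_two (h2.add_odd h3)
    exact ⟨h4, by omega, by omega⟩

theorem three_mul_eq_of_clPotential_eq (h6 : 6 ≤ V) (m : ℕ) (h0 : Odd (x m))
    (h1 : Even (x (m + 1))) (hm : 2 * (x m).natAbs = V) : 3 * x (m + 1) = 2 * x m := by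
  induction hd : (3 * x (m + 1) - 2 * x m).natAbs using Nat.strong_induction_on generalizing m with
  | _ d ih =>
    obtain ⟨h4, e3, e⟩ := hx.odd_even_of_clPotential_eq hcop hV h6 m h0 h1 hm
    by_cases hd0 : d = 0
    · omega
    have : 3 * x (m + 4) = 2 * x (m + 3) :=
      ih (3 * x (m + 4) - 2 * x (m + 3)).natAbs (by omega) (m + 3) (e3 ▸ h0.neg) h4
        (by rw [e3, Int.natAbs_neg, hm]) rfl
    omega

theorem exists_isCLLimitPair_of_clPotential_eq : ∃ k, IsCLLimitPair (x k) (x (k + 1)) := by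
  obtain ⟨n, h0, h1⟩ := hx.exists_odd_odd (hcop 0)
  rcases hx.odd_odd_of_clPotential_eq hcop hV n h0 h1 with ⟨heq, hu⟩ | ⟨h6, hb, h2⟩
  · exact ⟨n, by unfold IsCLLimitPair; omega⟩
  have e : 3 * x (n + 2) = 2 * x (n + 1) :=
    hx.three_mul_eq_of_clPotential_eq hcop hV h6 (n + 1) h1 h2 hb
  have hcop' : IsCoprime (x (n + 1)) (x (n + 2)) := hcop (n + 1)
  have hu : (x (n + 1) - x (n + 2)).natAbs = 1 :=
    Int.isUnit_iff_natAbs_eq.mp <| hcop'.isUnit_of_dvd' ⟨3, by omega⟩ ⟨2, by omega⟩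
  rcases Int.natAbs_eq_iff.mp hu with hu | hu
  · have h3 : x (n + 1) = 3 := by omega
    have h4 : x (n + 2) = 2 := by omega
    have h5 := hx.apply_add_two_of_eq h3 h4
    have h6 := hx.apply_add_two_of_eq h4 h5
    have h7 := hx.apply_add_two_of_eq h5 h6
    have h8 := hx.apply_add_two_of_eq h6 h7
    exact ⟨n + 5, .inr (.inr ⟨h7.trans (by decide), h8.trans (by decide)⟩)⟩
  · have h3 : x (n + 1) = -3 := by omega
    have h4 : x (n + 2) = -2 := by omega
    exact ⟨n + 2, .inr (.inr ⟨h4, (hx.apply_add_two_of_eq h3 h4).trans (by decide)⟩)⟩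

end ConstantPotential

theorem exists_isCLLimitPair (hx : IsCLTrajectory x) (h : IsCoprime (x 0) (x 1)) :
    ∃ k, IsCLLimitPair (x k) (x (k + 1)) := by
  induction hV : clPotential (x 0) (x 1) using Nat.strong_induction_on generalizing x with
  | _ V ih =>
    by_cases hdrop : ∃ n, clPotential (x n) (x (n + 1)) < V
    · obtain ⟨n, hn⟩ := hdrop
      obtain ⟨k, hk⟩ := ih _ hn (hx.shift n) (hx.isCoprime h n) rfl
      exact ⟨n + k, hk⟩
    push Not at hdrop
    exact hx.exists_isCLLimitPair_of_clPotential_eq (hx.isCoprime h) fun n =>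
      le_antisymm (hV ▸ hx.antitone_clPotential (Nat.zero_le n)) (hdrop n)

end IsCLTrajectory

theorem clark_lewis (x : ℕ → ℤ) (hx : IsCLTrajectory x)
    (hgcd : Int.gcd (x 0) (x 1) = 1) :
    ∃ N : ℕ,
      (∀ n ≥ N, x n = 1) ∨
      (∀ n ≥ N, x n = -1) ∨
      ((∀ n ≥ N, x (n + 6) = x n) ∧
        ∃ r : Fin 6, ∀ i : Fin 6,
          x (N + (i : ℕ)) = ![(-2 : ℤ), 1, 3, 2, -1, -3] (i + r)) := by
  obtain ⟨k, ⟨h0, h1⟩ | ⟨h0, h1⟩ | ⟨h0, h1⟩⟩ :=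
    hx.exists_isCLLimitPair (Int.isCoprime_iff_gcd_eq_one.mpr hgcd)
  · exact ⟨k, .inl (hx.const_of_apply_eq h0 h1)⟩
  · exact ⟨k, .inr (.inl (hx.const_of_apply_eq h0 h1))⟩
  · obtain ⟨hper, hval⟩ := hx.periodic_of_neg_two_one h0 h1
    exact ⟨k, .inr (.inr ⟨hper, 0, by simpa using hval⟩)⟩
end

section
/- Let x : ℕ → ℤ be a CL trajectory and let A = |x 0| + |x 1|. Then |x n| ≤ A for all n. -/
theorem cl_bounded (x : ℕ → ℤ) (hx : IsCLTrajectory x) (A : ℤ)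
    (hA : A = |x 0| + |x 1|) :
    ∀ n : ℕ, |x n| ≤ A := by
  have key : ∀ n : ℕ, |x n| ≤ A ∧ |x (n + 1)| ≤ A ∧ |x n - x (n + 1)| ≤ A := by
    intro n
    induction n with
    | zero =>
      refine ⟨by simp [hA, abs_nonneg], by simp [hA, abs_nonneg], ?_⟩
      rw [hA]; exact abs_sub _ _
    | succ n ih =>
      obtain ⟨h1, h2, h3⟩ := ih
      rcases Int.even_or_odd (x n + x (n + 1)) with he | ho
      · obtain ⟨c, hc⟩ := he
        have h4 : x (n + 2) = c := by
          have := (hx n).1 ⟨c, hc⟩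
          omega
        have h5 : x (n + 1 + 1) = x (n + 2) := rfl
        simp only [abs_le] at h1 h2 h3 ⊢
        omega
      · have h4 : x (n + 2) = x (n + 1) - x n := (hx n).2 ho
        have h5 : x (n + 1 + 1) = x (n + 2) := rfl
        simp only [abs_le] at h1 h2 h3 ⊢
        omega
  exact fun n => (key n).1
end

section
/- Let x : ℕ → ℤ be a CL trajectory and let A = |x 0| + |x 1|. Then for every n, |x n| ≤ A and |x(n+1)| ≤ A, and moreover whenever x n + x(n+1) is odd, also |x(n+1) − x n| ≤ A. -/
/-- The invariant: either the sum of abs values is ≤ A, or the two values have the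
same sign and each is ≤ A in absolute value. -/
def CLInv (A a b : ℤ) : Prop :=
  |a| + |b| ≤ A ∨ (((0 ≤ a ∧ 0 ≤ b) ∨ (a ≤ 0 ∧ b ≤ 0)) ∧ |a| ≤ A ∧ |b| ≤ A)

lemma clinv_even (A a b k : ℤ) (h : CLInv A a b) (hk : a + b = k + k) :
    CLInv A b k := by
  unfold CLInv at *
  rcases abs_cases a with ⟨h1, h1'⟩ | ⟨h1, h1'⟩ <;>
  rcases abs_cases b with ⟨h2, h2'⟩ | ⟨h2, h2'⟩ <;>
  rcases abs_cases k with ⟨h3, h3'⟩ | ⟨h3, h3'⟩ <;>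
  omega

lemma clinv_odd (A a b : ℤ) (h : CLInv A a b) : CLInv A b (b - a) := by
  unfold CLInv at *
  rcases abs_cases a with ⟨h1, h1'⟩ | ⟨h1, h1'⟩ <;>
  rcases abs_cases b with ⟨h2, h2'⟩ | ⟨h2, h2'⟩ <;>
  rcases abs_cases (b - a) with ⟨h3, h3'⟩ | ⟨h3, h3'⟩ <;>
  omega

lemma clinv_out (A a b : ℤ) (h : CLInv A a b) :
    |a| ≤ A ∧ |b| ≤ A ∧ |b - a| ≤ A := by
  unfold CLInv at h
  rcases abs_cases a with ⟨h1, h1'⟩ | ⟨h1, h1'⟩ <;>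
  rcases abs_cases b with ⟨h2, h2'⟩ | ⟨h2, h2'⟩ <;>
  rcases abs_cases (b - a) with ⟨h3, h3'⟩ | ⟨h3, h3'⟩ <;>
  omega

theorem cl_strong_bounded (x : ℕ → ℤ) (hx : IsCLTrajectory x) (A : ℤ)
    (hA : A = |x 0| + |x 1|) :
    ∀ n : ℕ, |x n| ≤ A ∧ |x (n + 1)| ≤ A ∧
      (Odd (x n + x (n + 1)) → |x (n + 1) - x n| ≤ A) := by
  have hinv : ∀ n : ℕ, CLInv A (x n) (x (n + 1)) := by
    intro n
    induction n with
    | zero => exact Or.inl (le_of_eq hA.symm)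
    | succ m ih =>
      rcases Int.even_or_odd (x m + x (m + 1)) with he | ho
      · have h2 := (hx m).1 he
        obtain ⟨k, hk⟩ := he
        have hxk : x (m + 2) = k := by omega
        rw [show m + 1 + 1 = m + 2 from rfl, hxk]
        exact clinv_even A (x m) (x (m + 1)) k ih hk
      · have h2 := (hx m).2 ho
        rw [show m + 1 + 1 = m + 2 from rfl, h2]
        exact clinv_odd A (x m) (x (m + 1)) ih
  intro n
  obtain ⟨h1, h2, h3⟩ := clinv_out A (x n) (x (n + 1)) (hinv n)
  exact ⟨h1, h2, fun _ => h3⟩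
end

section
/- There exist integers a, b such that the trajectory x : ℕ → ℤ with x 0 = a, x 1 = b of the rule x(n+2) = (x n + x(n+1))/2 if x n + x(n+1) is even and x(n+2) = x n + x(n+1) if x n + x(n+1) is odd, is unbounded: for every M ∈ ℤ there exists n with |x n| > M. -/
private def step1111 (a b : ℤ) : ℤ := if Even (a + b) then (a + b) / 2 else a + b

private def pstep1111 (p : ℤ × ℤ) : ℤ × ℤ := (p.2, step1111 p.1 p.2)

private def seq1111 (n : ℕ) : ℤ × ℤ := pstep1111^[n] (-2, -1)

private lemma seq1111_succ (n : ℕ) : seq1111 (n + 1) = pstep1111 (seq1111 n) := by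
  simp [seq1111, Function.iterate_succ_apply']

private lemma fst_succ (n : ℕ) : (seq1111 (n + 1)).1 = (seq1111 n).2 := by
  rw [seq1111_succ]; rfl

private lemma snd_eq (n : ℕ) : (seq1111 (n + 1)).2 = step1111 (seq1111 n).1 (seq1111 n).2 := by
  rw [seq1111_succ]; rfl

-- basic facts about step1111 under invariants
private lemma step_le (a b : ℤ) (ha : a ≤ -1) (hb : b ≤ -1) (hab : a ≠ b) :
    step1111 a b ≤ max a b - 1 := by
  unfold step1111
  split_ifs with h
  · -- even case
    have h1 : a + b ≤ 2 * max a b - 1 := by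
      rcases lt_or_gt_of_ne hab with h' | h' <;> simp [max_def] <;> omega
    obtain ⟨k, hk⟩ := h
    omega
  · have : a ≤ max a b ∧ b ≤ max a b := ⟨le_max_left a b, le_max_right a b⟩
    omega

private lemma step_le_neg (a b : ℤ) (ha : a ≤ -1) (hb : b ≤ -1) (hab : a ≠ b) :
    step1111 a b ≤ -1 := by
  have := step_le a b ha hb hab
  have : max a b ≤ -1 := max_le ha hb
  omega

private lemma step_ne (a b : ℤ) (ha : a ≤ -1) (hab : a ≠ b) : b ≠ step1111 a b := by
  unfold step1111
  split_ifs with h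
  · obtain ⟨k, hk⟩ := h
    intro hc; apply hab; omega
  · intro hc; omega

private def Inv1111 (p : ℤ × ℤ) : Prop := p.1 ≤ -1 ∧ p.2 ≤ -1 ∧ p.1 ≠ p.2

private lemma inv_seq1111 (n : ℕ) : Inv1111 (seq1111 n) := by
  induction n with
  | zero => exact ⟨by norm_num [seq1111], by norm_num [seq1111], by norm_num [seq1111]⟩
  | succ n ih =>
    obtain ⟨h1, h2, h3⟩ := ih
    refine ⟨by rw [fst_succ]; exact h2, ?_, ?_⟩
    · rw [snd_eq]; exact step_le_neg _ _ h1 h2 h3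
    · rw [fst_succ, snd_eq]; exact step_ne _ _ h1 h3

private def Mx (n : ℕ) : ℤ := max (seq1111 n).1 (seq1111 n).2

private lemma Mx_succ (n : ℕ) : Mx (n + 1) ≤ Mx n := by
  obtain ⟨h1, h2, h3⟩ := inv_seq1111 n
  have hs := step_le _ _ h1 h2 h3
  unfold Mx
  rw [fst_succ, snd_eq]
  exact max_le (le_max_right _ _) (le_trans hs (by omega))

private lemma Mx_two (n : ℕ) : Mx (n + 2) ≤ Mx n - 1 := by
  obtain ⟨h1, h2, h3⟩ := inv_seq1111 n
  obtain ⟨g1, g2, g3⟩ := inv_seq1111 (n + 1)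
  have hs := step_le _ _ h1 h2 h3
  have hs' := step_le _ _ g1 g2 g3
  have hM : Mx (n + 1) ≤ Mx n := Mx_succ n
  unfold Mx at *
  rw [show n + 2 = (n + 1) + 1 from rfl, fst_succ, snd_eq]
  apply max_le
  · exact hs
  · rw [snd_eq]; exact hs'.trans (sub_le_sub_right hM 1)

private lemma Mx_bound (k : ℕ) : Mx (2 * k) ≤ -1 - k := by
  induction k with
  | zero => simp [Mx, seq1111]
  | succ k ih =>
    have := Mx_two (2 * k)
    have h2 : 2 * (k + 1) = 2 * k + 2 := by ring
    rw [h2]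
    push_cast
    push_cast at ih
    omega

theorem exists_unbounded_trajectory_1111 :
    ∃ a b : ℤ, ∃ x : ℕ → ℤ, x 0 = a ∧ x 1 = b ∧
      (∀ n : ℕ,
        (Even (x n + x (n + 1)) → x (n + 2) = (x n + x (n + 1)) / 2) ∧
        (Odd (x n + x (n + 1)) → x (n + 2) = x n + x (n + 1))) ∧
      (∀ M : ℤ, ∃ n : ℕ, M < |x n|) := by
  refine ⟨-2, -1, fun n => (seq1111 n).1, rfl, ?_, ?_, ?_⟩
  all_goals beta_reduce
  · rw [fst_succ]; rfl
  · intro n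
    have hx : (seq1111 (n + 2)).1 = step1111 (seq1111 n).1 (seq1111 n).2 := by
      rw [show n + 2 = (n + 1) + 1 from rfl, fst_succ, snd_eq]
    have hx1 : (seq1111 (n + 1)).1 = (seq1111 n).2 := fst_succ n
    constructor
    · intro he
      rw [hx, hx1] at *
      unfold step1111
      rw [if_pos he]
    · intro ho
      rw [hx, hx1] at *
      unfold step1111
      rw [if_neg (Int.not_even_iff_odd.mpr ho)]
  · intro M
    refine ⟨2 * (M.toNat + 1), ?_⟩
    have h1 : (seq1111 (2 * (M.toNat + 1))).1 ≤ Mx (2 * (M.toNat + 1)) := le_max_left _ _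
    have h2 := Mx_bound (M.toNat + 1)
    have h3 : M ≤ (M.toNat : ℤ) := Int.self_le_toNat M
    push_cast at h2
    have : (seq1111 (2 * (M.toNat + 1))).1 ≤ -1 - (M.toNat + 1 : ℤ) := le_trans h1 h2
    rw [abs_of_nonpos (by omega)]
    omega
end

section
/- There exist integers a, b such that the trajectory x : ℕ → ℤ with x 0 = a, x 1 = b of the rule x(n+2) = (x n − x(n+1))/2 if x n + x(n+1) is even and x(n+2) = x n − x(n+1) if x n + x(n+1) is odd, is unbounded: for every M ∈ ℤ there exists n with |x n| > M. -/
/-!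
Writing `x n = (-1) ^ n * u n` turns the rule into `u (n + 2) = (u n + u (n + 1)) / 2` when
`u n + u (n + 1)` is even and `u (n + 2) = u n + u (n + 1)` otherwise; starting from `u = 1, 2`
all terms stay positive. The quantity `u n + 2 * u (n + 1)` is unchanged by a halving step and
grows by `u n + u (n + 1) ≥ 2` at every other step. A halving step multiplies the difference
`u (n + 1) - u n` by `-1/2`, and this difference never vanishes, so halving steps cannot go on
forever: the quantity, hence `u`, is unbounded.
-/

def halvedSum (a b : ℤ) : ℤ := if Even (a + b) then (a + b) / 2 else a + b

def halvedSumSeq (a b : ℤ) : ℕ → ℤ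
  | 0 => a
  | 1 => b
  | n + 2 => halvedSum (halvedSumSeq a b n) (halvedSumSeq a b (n + 1))

section halvedSum

variable {a b : ℤ}

theorem two_mul_halvedSum_of_even (h : Even (a + b)) : 2 * halvedSum a b = a + b := by
  rw [halvedSum, if_pos h, Int.two_mul_ediv_two_of_even h]

theorem halvedSum_of_odd (h : Odd (a + b)) : halvedSum a b = a + b := by
  rw [halvedSum, if_neg (Int.not_even_iff_odd.mpr h)]

theorem halvedSum_pos (h : 0 < a + b) : 0 < halvedSum a b := by
  rcases Int.even_or_odd (a + b) with he | ho
  · have := two_mul_halvedSum_of_even he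
    omega
  · rw [halvedSum_of_odd ho]
    exact h

theorem halvedSum_ne_right (ha : 0 < a) (hab : a ≠ b) : halvedSum a b ≠ b := by
  rcases Int.even_or_odd (a + b) with h | h
  · have := two_mul_halvedSum_of_even h
    omega
  · rw [halvedSum_of_odd h]
    omega

theorem add_two_mul_le_add_two_mul_halvedSum (h : 0 ≤ a + b) :
    a + 2 * b ≤ b + 2 * halvedSum a b := by
  rcases Int.even_or_odd (a + b) with he | ho
  · have := two_mul_halvedSum_of_even he
    omega
  · rw [halvedSum_of_odd ho]
    omega

theorem add_two_mul_halvedSum_of_odd (h : Odd (a + b)) :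
    b + 2 * halvedSum a b = a + 2 * b + (a + b) := by
  rw [halvedSum_of_odd h]
  ring

end halvedSum

section halvedSumSeq

variable {a b : ℤ}

theorem halvedSumSeq_add_two (n : ℕ) :
    halvedSumSeq a b (n + 2) = halvedSum (halvedSumSeq a b n) (halvedSumSeq a b (n + 1)) := by
  rw [halvedSumSeq]

theorem halvedSumSeq_pos (ha : 0 < a) (hb : 0 < b) (n : ℕ) : 0 < halvedSumSeq a b n := by
  induction n using Nat.twoStepInduction with
  | zero => exact ha
  | one => exact hb
  | more n h₀ h₁ => exact halvedSum_pos (add_pos h₀ h₁)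

theorem halvedSumSeq_succ_ne (ha : 0 < a) (hb : 0 < b) (hab : a ≠ b) (n : ℕ) :
    halvedSumSeq a b (n + 1) ≠ halvedSumSeq a b n := by
  induction n with
  | zero => exact hab.symm
  | succ n ih =>
    rw [halvedSumSeq_add_two]
    exact halvedSum_ne_right (halvedSumSeq_pos ha hb n) ih.symm

theorem exists_odd_halvedSumSeq (ha : 0 < a) (hb : 0 < b) (hab : a ≠ b) (n : ℕ) :
    ∃ m, n ≤ m ∧ Odd (halvedSumSeq a b m + halvedSumSeq a b (m + 1)) := by
  by_contra! hall
  have hdiff : ∀ k, halvedSumSeq a b (n + 1) - halvedSumSeq a b n =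
      (-2) ^ k * (halvedSumSeq a b (n + k + 1) - halvedSumSeq a b (n + k)) := by
    intro k
    induction k with
    | zero => simp
    | succ k ih =>
      have hhalf := two_mul_halvedSum_of_even
        (Int.not_odd_iff_even.mp (hall (n + k) (Nat.le_add_right n k)))
      rw [← halvedSumSeq_add_two] at hhalf
      rw [ih, ← add_assoc, pow_succ]
      linear_combination (-2) ^ k * hhalf
  have hdvd : ∀ k : ℕ, (2 : ℤ) ^ k ∣ halvedSumSeq a b (n + 1) - halvedSumSeq a b n := fun k =>
    hdiff k ▸ dvd_mul_of_dvd_left (pow_dvd_pow_of_dvd ⟨-1, by norm_num⟩ k) _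
  exact FiniteMultiplicity.not_iff_forall.mpr hdvd <| Int.finiteMultiplicity_iff.mpr
    ⟨by norm_num, sub_ne_zero.mpr (halvedSumSeq_succ_ne ha hb hab n)⟩

theorem monotone_halvedSumSeq_add_two_mul_succ (ha : 0 < a) (hb : 0 < b) :
    Monotone fun n => halvedSumSeq a b n + 2 * halvedSumSeq a b (n + 1) := by
  refine monotone_nat_of_le_succ fun n => ?_
  rw [halvedSumSeq_add_two]
  exact add_two_mul_le_add_two_mul_halvedSum
    (add_pos (halvedSumSeq_pos ha hb n) (halvedSumSeq_pos ha hb (n + 1))).le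

theorem exists_lt_halvedSumSeq (ha : 0 < a) (hb : 0 < b) (hab : a ≠ b) (M : ℤ) :
    ∃ n, M < halvedSumSeq a b n := by
  have hpot : ∀ k : ℕ, ∃ n, k ≤ halvedSumSeq a b n + 2 * halvedSumSeq a b (n + 1) := by
    intro k
    induction k with
    | zero => exact ⟨0, by positivity [halvedSumSeq_pos ha hb 0, halvedSumSeq_pos ha hb 1]⟩
    | succ k ih =>
      obtain ⟨n, hn⟩ := ih
      obtain ⟨m, hnm, hodd⟩ := exists_odd_halvedSumSeq ha hb hab n
      have hmono : halvedSumSeq a b n + 2 * halvedSumSeq a b (n + 1) ≤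
          halvedSumSeq a b m + 2 * halvedSumSeq a b (m + 1) :=
        monotone_halvedSumSeq_add_two_mul_succ ha hb hnm
      have hjump := add_two_mul_halvedSum_of_odd hodd
      rw [← halvedSumSeq_add_two] at hjump
      have := halvedSumSeq_pos ha hb m
      have := halvedSumSeq_pos ha hb (m + 1)
      refine ⟨m + 1, ?_⟩
      show ((k + 1 : ℕ) : ℤ) ≤ halvedSumSeq a b (m + 1) + 2 * halvedSumSeq a b (m + 2)
      omega
  obtain ⟨n, hn⟩ := hpot (3 * M + 1).toNat
  by_cases h : M < halvedSumSeq a b n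
  · exact ⟨n, h⟩
  · exact ⟨n + 1, by omega⟩

end halvedSumSeq

def IsTrajectory (x : ℕ → ℤ) : Prop :=
  ∀ n, (Even (x n + x (n + 1)) → x (n + 2) = (x n - x (n + 1)) / 2) ∧
    (Odd (x n + x (n + 1)) → x (n + 2) = x n - x (n + 1))

theorem isTrajectory_neg_one_pow_mul {u : ℕ → ℤ}
    (hu : ∀ n, u (n + 2) = halvedSum (u n) (u (n + 1))) :
    IsTrajectory fun n => (-1) ^ n * u n := by
  intro n
  set x : ℕ → ℤ := fun n => (-1) ^ n * u n
  have hsum : x n + x (n + 1) = (-1) ^ n * (u n - u (n + 1)) := by ring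
  have hsub : x n - x (n + 1) = (-1) ^ n * (u n + u (n + 1)) := by ring
  have hnext : x (n + 2) = (-1) ^ n * u (n + 2) := by ring
  have hpar : Even (x n + x (n + 1)) ↔ Even (u n + u (n + 1)) := by
    rw [hsum]
    simp [Int.even_mul, Int.even_sub, Int.even_add, parity_simps]
  refine ⟨fun he => ?_, fun ho => ?_⟩
  · rw [hnext, hsub, ← two_mul_halvedSum_of_even (hpar.mp he), ← hu, mul_left_comm,
      Int.mul_ediv_cancel_left _ two_ne_zero]
  · rw [← Int.not_even_iff_odd, hpar, Int.not_even_iff_odd] at ho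
    rw [hnext, hsub, hu, halvedSum_of_odd ho]

theorem exists_unbounded_trajectory_1m11m1 :
    ∃ a b : ℤ, ∃ x : ℕ → ℤ, x 0 = a ∧ x 1 = b ∧
      (∀ n : ℕ,
        (Even (x n + x (n + 1)) → x (n + 2) = (x n - x (n + 1)) / 2) ∧
        (Odd (x n + x (n + 1)) → x (n + 2) = x n - x (n + 1))) ∧
      (∀ M : ℤ, ∃ n : ℕ, M < |x n|) := by
  refine ⟨1, -2, fun n => (-1) ^ n * halvedSumSeq 1 2 n, by simp [halvedSumSeq],
    by simp [halvedSumSeq], isTrajectory_neg_one_pow_mul halvedSumSeq_add_two, fun M => ?_⟩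
  obtain ⟨n, hn⟩ := exists_lt_halvedSumSeq one_pos two_pos (by norm_num) M
  refine ⟨n, ?_⟩
  rwa [abs_mul, abs_neg_one_pow, one_mul, abs_of_pos (halvedSumSeq_pos one_pos two_pos n)]
end

section
/- Let x : ℕ → ℤ be the 10-periodic sequence with (x 0, x 1, …, x 9) = (2, 5, 7, 1, −3, −2, −5, −7, −1, 3) and x(n+10) = x n for all n. Then x is an R1 trajectory, i.e., it satisfies x(n+2) = (x(n+1) − x n)/2 whenever x n + x(n+1) is even and x(n+2) = x n + x(n+1) whenever x n + x(n+1) is odd, for every n. -/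
/-- An R1 trajectory: `x (n+2) = (x (n+1) - x n) / 2` when `x n + x (n+1)` is even,
and `x (n+2) = x n + x (n+1)` when it is odd. -/
def IsR1Trajectory (x : ℕ → ℤ) : Prop :=
  ∀ n : ℕ,
    (Even (x n + x (n + 1)) → x (n + 2) = (x (n + 1) - x n) / 2) ∧
    (Odd (x n + x (n + 1)) → x (n + 2) = x n + x (n + 1))

theorem r1_ten_cycle (x : ℕ → ℤ)
    (h0 : x 0 = 2) (h1 : x 1 = 5) (h2 : x 2 = 7) (h3 : x 3 = 1)
    (h4 : x 4 = -3) (h5 : x 5 = -2) (h6 : x 6 = -5) (h7 : x 7 = -7)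
    (h8 : x 8 = -1) (h9 : x 9 = 3)
    (hper : ∀ n : ℕ, x (n + 10) = x n) :
    IsR1Trajectory x := by
  have h10 : x 10 = 2 := by have := hper 0; simp at this; rw [this, h0]
  have h11 : x 11 = 5 := by have := hper 1; rw [show (11:ℕ) = 1 + 10 from rfl, this, h1]
  intro n
  induction n using Nat.strong_induction_on with
  | _ n ih =>
    by_cases h : n < 10
    · interval_cases n <;>
        refine ⟨fun hp => ?_, fun hp => ?_⟩ <;>
        simp only [h0, h1, h2, h3, h4, h5, h6, h7, h8, h9, h10, h11] at hp ⊢ <;>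
        first | exact absurd hp (by decide) | norm_num
    · obtain ⟨m, rfl⟩ : ∃ m, n = m + 10 := ⟨n - 10, by omega⟩
      have e1 : x (m + 10 + 1) = x (m + 1) := by
        rw [show m + 10 + 1 = m + 1 + 10 by omega, hper]
      have e2 : x (m + 10 + 2) = x (m + 2) := by
        rw [show m + 10 + 2 = m + 2 + 10 by omega, hper]
      rw [hper, e1, e2]
      exact ih m (by omega)
end

section
/- The 6-periodic sequence x : ℕ → ℤ with (x 0, x 1, x 2, x 3, x 4, x 5) = (−2, 1, 3, 2, −1, −3) and x(n+6) = x n for all n is a CL trajectory. -/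
theorem cl_six_cycle (x : ℕ → ℤ)
    (h0 : x 0 = -2) (h1 : x 1 = 1) (h2 : x 2 = 3)
    (h3 : x 3 = 2) (h4 : x 4 = -1) (h5 : x 5 = -3)
    (hper : ∀ n : ℕ, x (n + 6) = x n) :
    IsCLTrajectory x := by
  have key : ∀ n : ℕ, x n = x (n % 6) := by
    intro n
    induction n using Nat.strong_induction_on with
    | _ n ih =>
      by_cases h : n < 6
      · rw [Nat.mod_eq_of_lt h]
      · have h6 : n - 6 + 6 = n := by omega
        have := hper (n - 6)
        rw [h6] at this
        rw [this, ih (n - 6) (by omega)]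
        congr 1
        omega
  intro n
  have e1 : x (n + 1) = x ((n + 1) % 6) := key _
  have e2 : x (n + 2) = x ((n + 2) % 6) := key _
  have e0 : x n = x (n % 6) := key _
  rw [e0, e1, e2]
  have m1 : (n + 1) % 6 = (n % 6 + 1) % 6 := by omega
  have m2 : (n + 2) % 6 = (n % 6 + 2) % 6 := by omega
  rw [m1, m2]
  have : n % 6 < 6 := Nat.mod_lt _ (by norm_num)
  interval_cases h : n % 6 <;>
    norm_num [h0, h1, h2, h3, h4, h5] <;>
    first
      | (constructor <;> intro hp <;> first | rfl | (exfalso; revert hp; decide))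
      | decide
end
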